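/- arXiv:2511.20124 — 2 statements merged into one kernel-verified Lean document; each statement's English description precedes it below -/
import Mathlib

section
/- Let A = ⊕_{n≥0} A_n be a commutative ℕ-graded ℂ-algebra which is an integral domain with finite-dimensional graded pieces. Define κ(A) = −∞ if A_l = 0 for all l ≥ 1, and κ(A) = limsup_{l→∞} log(dim_ℂ A_l)/log l otherwise. If dim_ℂ A_{l0} ≥ 2 for some l0 ≥ 1, then κ(A) ≥ 1. -/
/-!
Two linearly independent elements `x, y` of `A_{l₀}` give a quotient `x / y` in the fraction
field that is transcendental over `ℂ`: being algebraic over the algebraically closed `ℂ` would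
make it a scalar. Hence the `k + 1` monomials `x ^ i * y ^ (k - i)` are linearly independent in
`A_{k l₀}`, so along `l = k l₀` the ratio `log (dim A_l) / log l` is at least
`log k / log (k l₀)`, which tends to `1`.
-/

open scoped Classical

open Filter Topology Module

theorem Transcendental.linearIndependent_pow {R B : Type*} [CommRing R] [Ring B] [Algebra R B]
    {x : B} (hx : Transcendental R x) : LinearIndependent R (fun n : ℕ => x ^ n) := by
  have := (Polynomial.basisMonomials R).linearIndependent.map' (Polynomial.aeval x).toLinearMap
    (LinearMap.ker_eq_bot.mpr (transcendental_iff_injective.mp hx))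
  simpa [Function.comp_def] using this

section AlgClosed

variable {K A : Type*} [Field K] [IsAlgClosed K] [CommRing A] [IsDomain A] [Algebra K A]

theorem transcendental_div_of_linearIndependent {x y : A} (hxy : LinearIndependent K ![x, y]) :
    Transcendental K (algebraMap A (FractionRing A) x / algebraMap A (FractionRing A) y) := by
  obtain ⟨hy, hne⟩ := linearIndependent_fin2.mp hxy
  simp only [Matrix.cons_val_one, Matrix.cons_val_zero] at hy hne
  set f := algebraMap A (FractionRing A)
  have hfy : f y ≠ 0 := by simpa [f] using hy
  intro halg
  obtain ⟨c, hc⟩ := (minpoly.degree_eq_one_iff (A := K)).mp <|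
    IsAlgClosed.degree_eq_one_of_irreducible K (minpoly.irreducible halg.isIntegral)
  refine hne c (IsFractionRing.injective A (FractionRing A) ?_)
  rw [Algebra.smul_def, map_mul, ← IsScalarTower.algebraMap_apply, hc, div_mul_cancel₀ _ hfy]

theorem linearIndependent_pow_mul_pow {x y : A} (hxy : LinearIndependent K ![x, y]) (k : ℕ) :
    LinearIndependent K (fun i : Fin (k + 1) => x ^ (i : ℕ) * y ^ (k - i)) := by
  set F := FractionRing A
  set f := IsScalarTower.toAlgHom K A F
  have hfy : f y ≠ 0 := by simpa [f] using (linearIndependent_fin2.mp hxy).1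
  -- dividing by `y ^ k` turns the monomials into the powers of `x / y`
  let L : A →ₗ[K] F := LinearMap.mulLeft K (f y ^ k)⁻¹ ∘ₗ f.toLinearMap
  have hL : L ∘ (fun i : Fin (k + 1) => x ^ (i : ℕ) * y ^ (k - i)) =
      fun i : Fin (k + 1) => (f x / f y) ^ (i : ℕ) := by
    ext i
    have hk : f y ^ k = f y ^ (i : ℕ) * f y ^ (k - i) := by
      rw [← pow_add, Nat.add_sub_cancel' i.is_le]
    simp only [L, Function.comp_apply, LinearMap.comp_apply, LinearMap.mulLeft_apply,
      AlgHom.toLinearMap_apply, map_mul, map_pow, hk, div_pow]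
    have hp : f y ^ (k - (i : ℕ)) ≠ 0 := pow_ne_zero _ hfy
    rw [← div_eq_inv_mul, mul_div_mul_right _ _ hp]
  refine LinearIndependent.of_comp L ?_
  rw [hL]
  exact (transcendental_div_of_linearIndependent hxy).linearIndependent_pow.comp _
    Fin.val_injective

theorem SetLike.pow_mul_pow_mem_graded {M σ : Type*} [Monoid M] [SetLike σ M] (𝒜 : ℕ → σ)
    [SetLike.GradedMonoid 𝒜] {l : ℕ} {x y : M} (hx : x ∈ 𝒜 l) (hy : y ∈ 𝒜 l) {i k : ℕ}
    (hik : i ≤ k) : x ^ i * y ^ (k - i) ∈ 𝒜 (k * l) := by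
  have h :=
    SetLike.mul_mem_graded (SetLike.pow_mem_graded i hx) (SetLike.pow_mem_graded (k - i) hy)
  rwa [smul_eq_mul, smul_eq_mul, ← add_mul, Nat.add_sub_cancel' hik] at h

theorem succ_le_finrank_mul_of_two_le_finrank (𝒜 : ℕ → Submodule K A) [SetLike.GradedMonoid 𝒜]
    {l : ℕ} (h2 : 2 ≤ finrank K (𝒜 l)) (k : ℕ) [FiniteDimensional K (𝒜 (k * l))] :
    k + 1 ≤ finrank K (𝒜 (k * l)) := by
  obtain ⟨v, hv⟩ := exists_linearIndependent_of_le_finrank h2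
  have hpair : LinearIndependent K ![(v 0 : A), (v 1 : A)] := by
    have hv' : ![(v 0 : A), (v 1 : A)] = (𝒜 l).subtype ∘ v := by
      ext i; fin_cases i <;> rfl
    exact hv' ▸ hv.map' (𝒜 l).subtype (Submodule.ker_subtype _)
  let m : Fin (k + 1) → 𝒜 (k * l) := fun i =>
    ⟨_, SetLike.pow_mul_pow_mem_graded 𝒜 (v 0).2 (v 1).2 i.is_le⟩
  have hm : LinearIndependent K m :=
    .of_comp (𝒜 (k * l)).subtype (linearIndependent_pow_mul_pow hpair k)
  simpa using hm.fintype_card_le_finrank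

end AlgClosed

theorem tendsto_log_div_log_mul_const {c : ℝ} (hc : 0 < c) :
    Tendsto (fun x : ℝ => Real.log x / Real.log (x * c)) atTop (𝓝 1) := by
  have hlim : Tendsto (fun x : ℝ => (1 + Real.log c / Real.log x)⁻¹) atTop (𝓝 1) := by
    simpa using (tendsto_const_nhds.div_atTop Real.tendsto_log_atTop).const_add 1 |>.inv₀
      (by norm_num)
  refine hlim.congr' ?_
  filter_upwards [eventually_gt_atTop 1] with x hx
  have hlog : Real.log x ≠ 0 := (Real.log_pos hx).ne'
  rw [Real.log_mul (by positivity) hc.ne']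
  field_simp

theorem one_le_limsup_log_div_log {d : ℕ → ℕ} {l : ℕ} (hl : 1 ≤ l) (hd : ∀ k, k ≤ d (k * l)) :
    (1 : EReal) ≤ limsup (fun n : ℕ => ((Real.log (d n) / Real.log n : ℝ) : EReal)) atTop := by
  have hmul : Tendsto (fun k : ℕ => k * l) atTop atTop := tendsto_id.atTop_mul_const' hl
  have hratio : Tendsto (fun k : ℕ => ((Real.log k / Real.log (k * l : ℕ) : ℝ) : EReal))
      atTop (𝓝 1) := by
    have h : Tendsto (fun k : ℕ => Real.log k / Real.log ((k : ℝ) * l)) atTop (𝓝 1) :=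
      (tendsto_log_div_log_mul_const (c := l) (by positivity)).comp tendsto_natCast_atTop_atTop
    push_cast
    exact (continuous_coe_real_ereal.tendsto 1).comp h
  calc (1 : EReal)
      = limsup (fun k : ℕ => ((Real.log k / Real.log (k * l : ℕ) : ℝ) : EReal)) atTop :=
        hratio.limsup_eq.symm
    _ ≤ limsup (fun k : ℕ => ((Real.log (d (k * l)) / Real.log (k * l : ℕ) : ℝ) : EReal))
          atTop := by
        refine limsup_le_limsup ((eventually_ge_atTop 1).mono fun k hk => ?_)
        have hlog : Real.log k ≤ Real.log (d (k * l)) :=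
          Real.log_le_log (by exact_mod_cast hk) (by exact_mod_cast hd k)
        exact EReal.coe_le_coe_iff.mpr
          (div_le_div_of_nonneg_right hlog (Real.log_natCast_nonneg _))
    _ ≤ _ := hmul.limsup_comp_le_limsup
          (u := fun n : ℕ => ((Real.log (d n) / Real.log n : ℝ) : EReal))

/-- For a commutative ℕ-graded ℂ-algebra which is an integral domain with finite-dimensional
graded pieces, if `dim A_{l0} ≥ 2` for some `l0 ≥ 1`, then the Iitaka-type dimension
`κ(A)` is at least `1`. -/
theorem stmt3 (A : Type*) [CommRing A] [IsDomain A] [Algebra ℂ A]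
    (𝒜 : ℕ → Submodule ℂ A) [GradedAlgebra 𝒜]
    (hfin : ∀ n : ℕ, FiniteDimensional ℂ (𝒜 n))
    (l0 : ℕ) (hl0 : 1 ≤ l0) (h2 : 2 ≤ Module.finrank ℂ (𝒜 l0)) :
    (1 : EReal) ≤
      if ∀ l : ℕ, 1 ≤ l → 𝒜 l = ⊥ then (⊥ : EReal)
      else
        Filter.limsup
          (fun l : ℕ =>
            ((Real.log (Module.finrank ℂ (𝒜 l)) / Real.log l : ℝ) : EReal))
          Filter.atTop := by
  have hne : 𝒜 l0 ≠ ⊥ := fun h => by rw [h, finrank_bot] at h2; omega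
  rw [if_neg fun h => hne (h l0 hl0)]
  refine one_le_limsup_log_div_log hl0 fun k => ?_
  have := hfin (k * l0)
  exact (succ_le_finrank_mul_of_two_le_finrank 𝒜 h2 k).trans' k.le_succ
end

section
/- Let V be a finite-dimensional real vector space, let J₀ and J₁ be linear complex structures on V (J₀² = J₁² = −id), and let ω be an alternating bilinear form on V such that ω(v, J₀v) > 0 and ω(v, J₁v) > 0 for every nonzero v ∈ V. Then there exists a linear endomorphism L of V with L∘J₀ + J₀∘L = 0, such that id + L is invertible and J₁ = (id + L) ∘ J₀ ∘ (id + L)⁻¹. -/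
/-- Audin's parametrization: if `J₀` and `J₁` are linear complex structures on a
finite-dimensional real vector space `V`, both tamed by the same alternating bilinear form `ω`,
then `J₁ = (1 + L) J₀ (1 + L)⁻¹` for some `L` anticommuting with `J₀`, with `1 + L`
invertible. -/
theorem stmt10 (V : Type*) [AddCommGroup V] [Module ℝ V] [FiniteDimensional ℝ V]
    (J₀ J₁ : Module.End ℝ V) (h0 : J₀ * J₀ = -1) (h1 : J₁ * J₁ = -1)
    (ω : V →ₗ[ℝ] V →ₗ[ℝ] ℝ) (hskew : ∀ v w : V, ω v w = - ω w v)
    (ht0 : ∀ v : V, v ≠ 0 → 0 < ω v (J₀ v)) (ht1 : ∀ v : V, v ≠ 0 → 0 < ω v (J₁ v)) :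
    ∃ L : Module.End ℝ V, L * J₀ + J₀ * L = 0 ∧ IsUnit (1 + L) ∧
      J₁ * (1 + L) = (1 + L) * J₀ := by
  set S : Module.End ℝ V := J₀ + J₁ with hS
  -- S is injective, hence a unit
  have hker : LinearMap.ker S = ⊥ := by
    rw [LinearMap.ker_eq_bot']
    intro v hv
    by_contra hv0
    have h := ht0 v hv0
    have h' := ht1 v hv0
    have hz : ω v (S v) = 0 := by rw [hv]; simp
    have hsum : ω v (J₀ v) + ω v (J₁ v) = 0 := by
      rw [← hz, hS]; simp [LinearMap.add_apply]
    linarith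
  have hSu : IsUnit S := (LinearMap.isUnit_iff_ker_eq_bot S).2 hker
  obtain ⟨u, hu⟩ := hSu
  set T : Module.End ℝ V := ↑u⁻¹ with hT
  have hST : S * T = 1 := by rw [← hu, hT]; exact u.mul_inv
  have hTS : T * S = 1 := by rw [← hu, hT]; exact u.inv_mul
  -- key intertwining identities
  have k2 : J₀ * S = S * J₁ := by
    rw [hS, mul_add, add_mul, h0, h1]; abel
  have tk1 : T * J₀ = J₁ * T := by
    calc T * J₀ = T * J₀ * (S * T) := by rw [hST, mul_one]
    _ = T * (J₀ * S) * T := by noncomm_ring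
    _ = T * (S * J₁) * T := by rw [k2]
    _ = (T * S) * (J₁ * T) := by noncomm_ring
    _ = J₁ * T := by rw [hTS, one_mul]
  have h2 : (1 : Module.End ℝ V) + (J₁ - J₀) * T = (J₁ + J₁) * T := by
    calc (1 : Module.End ℝ V) + (J₁ - J₀) * T = S * T + (J₁ - J₀) * T := by rw [hST]
    _ = (S + (J₁ - J₀)) * T := by noncomm_ring
    _ = (J₁ + J₁) * T := by rw [hS]; noncomm_ring
  refine ⟨(J₁ - J₀) * T, ?_, ?_, ?_⟩
  · have e1 : (J₁ - J₀) * T * J₀ + J₀ * ((J₁ - J₀) * T)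
        = ((J₁ - J₀) * J₁ + J₀ * (J₁ - J₀)) * T := by
      rw [mul_assoc (J₁ - J₀) T J₀, tk1]; noncomm_ring
    rw [e1]
    have e2 : (J₁ - J₀) * J₁ + J₀ * (J₁ - J₀) = J₁ * J₁ - J₀ * J₀ := by noncomm_ring
    rw [e2, h0, h1]; simp
  · rw [h2]
    set z : Module.End ℝ V := (-(2⁻¹ : ℝ)) • J₁ with hz
    have key1 : (J₁ + J₁) * z = 1 := by
      rw [hz, mul_smul_comm, add_mul, h1, smul_add]
      simp only [← neg_smul, ← add_smul]
      norm_num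
    have key2 : z * (J₁ + J₁) = 1 := by
      rw [hz, smul_mul_assoc, mul_add, h1, smul_add]
      simp only [← neg_smul, ← add_smul]
      norm_num
    have hWY : ((J₁ + J₁) * T) * (S * z) = 1 := by
      rw [mul_assoc, ← mul_assoc T S z, hTS, one_mul, key1]
    have hYW : (S * z) * ((J₁ + J₁) * T) = 1 := by
      rw [mul_assoc, ← mul_assoc z (J₁ + J₁) T, key2, one_mul, hST]
    exact ⟨⟨(J₁ + J₁) * T, S * z, hWY, hYW⟩, rfl⟩
  · rw [h2]
    calc J₁ * ((J₁ + J₁) * T) = (J₁ * J₁ + J₁ * J₁) * T := by noncomm_ring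
    _ = (-1 + -1) * T := by rw [h1]
    _ = (J₁ * J₁ + J₁ * J₁) * T := by rw [h1]
    _ = (J₁ + J₁) * (J₁ * T) := by noncomm_ring
    _ = (J₁ + J₁) * (T * J₀) := by rw [tk1]
    _ = (J₁ + J₁) * T * J₀ := by noncomm_ring
end
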